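/- (Appendix B, single-cell CFL bound, Lemma on a single primary cell.) Fix positive reals ℏ, m, Δx, Δy, Δz and a potential U : Fin 2 × Fin 2 × Fin 2 → ℝ on the 8 corners of a cell. Let Ŵ : Matrix (Fin 2) (Fin 2) ℝ := !![1, -1; -1, 1] and define Σcell := (ℏ/m) • ((1/Δx^2) • (1 ⊗ₖ 1 ⊗ₖ Ŵ) + (1/Δy^2) • (1 ⊗ₖ Ŵ ⊗ₖ 1) + (1/Δz^2) • (Ŵ ⊗ₖ 1 ⊗ₖ 1)) + (1/ℏ) • Matrix.diagonal U, where 1 denotes the 2×2 identity matrix and ⊗ₖ the Kronecker product with indices identified with Fin 2 × Fin 2 × Fin 2. Then every eigenvalue μ ∈ spectrum ℝ Σcell satisfies |μ| ≤ (2*ℏ/m) * (1/Δx^2 + 1/Δy^2 + 1/Δz^2) + (1/ℏ) * (max over the 8 corners c of |U c|); i.e., the single-cell conventional CFL limit is at most the single-cell generalized CFL limit. -/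

import Mathlib

open Matrix Kronecker

noncomputable section

/-- Triple Kronecker product with indices identified with `α × β × γ`. -/
def kron3 {α β γ : Type*} (A : Matrix α α ℝ) (B : Matrix β β ℝ) (C : Matrix γ γ ℝ) :
    Matrix (α × β × γ) (α × β × γ) ℝ :=
  Matrix.reindex (Equiv.prodAssoc α β γ) (Equiv.prodAssoc α β γ) (A ⊗ₖ B ⊗ₖ C)

/-- The scaled single-cell FDTD-Q Hamiltonian `Σcell`. -/
def SgmCell (ℏ m Δx Δy Δz : ℝ) (U : Fin 2 × Fin 2 × Fin 2 → ℝ) :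
    Matrix (Fin 2 × Fin 2 × Fin 2) (Fin 2 × Fin 2 × Fin 2) ℝ :=
  (ℏ/m) • ((1/Δx^2) • kron3 (1 : Matrix (Fin 2) (Fin 2) ℝ) (1 : Matrix (Fin 2) (Fin 2) ℝ)
        (!![1, -1; -1, 1])
    + (1/Δy^2) • kron3 (1 : Matrix (Fin 2) (Fin 2) ℝ) (!![1, -1; -1, 1])
        (1 : Matrix (Fin 2) (Fin 2) ℝ)
    + (1/Δz^2) • kron3 (!![1, -1; -1, 1]) (1 : Matrix (Fin 2) (Fin 2) ℝ)
        (1 : Matrix (Fin 2) (Fin 2) ℝ))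
  + (1/ℏ) • Matrix.diagonal U

/-! Every eigenvalue of a matrix is bounded by any submultiplicative matrix norm; we use the
`ℓ∞` operator norm (maximal absolute row sum). It is submultiplicative under Kronecker
products, so each hopping term `kron3 1 1 Ŵ`, … has norm at most `‖1‖ ‖1‖ ‖Ŵ‖ = 2`, while the
potential term `diagonal U` has norm `max |U|`. The triangle inequality assembles the bound. -/

open scoped NNReal

namespace Matrix

section LinftyOp

attribute [local instance] Matrix.linftyOpSeminormedAddCommGroup

variable {l m n p α : Type*} [Fintype l] [Fintype m] [Fintype n] [Fintype p]

theorem linfty_opNNNorm_le_iff [SeminormedAddCommGroup α] {A : Matrix m n α} {r : ℝ≥0} :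
    ‖A‖₊ ≤ r ↔ ∀ i, ∑ j, ‖A i j‖₊ ≤ r := by
  rw [linfty_opNNNorm_def, Finset.sup_le_iff]
  simp only [Finset.mem_univ, true_implies]

theorem linfty_opNNNorm_kronecker_le [SeminormedRing α] (A : Matrix l m α) (B : Matrix n p α) :
    ‖A ⊗ₖ B‖₊ ≤ ‖A‖₊ * ‖B‖₊ := by
  refine linfty_opNNNorm_le_iff.2 fun ⟨i, k⟩ => ?_
  calc ∑ jl : m × p, ‖(A ⊗ₖ B) (i, k) jl‖₊
      ≤ ∑ jl : m × p, ‖A i jl.1‖₊ * ‖B k jl.2‖₊ :=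
        Finset.sum_le_sum fun _ _ => nnnorm_mul_le _ _
    _ = (∑ j, ‖A i j‖₊) * ∑ j, ‖B k j‖₊ := by rw [Fintype.sum_prod_type, Finset.sum_mul_sum]
    _ ≤ ‖A‖₊ * ‖B‖₊ :=
        mul_le_mul' (linfty_opNNNorm_le_iff.1 le_rfl i) (linfty_opNNNorm_le_iff.1 le_rfl k)

theorem linfty_opNNNorm_reindex [SeminormedAddCommGroup α] (e : m ≃ l) (f : n ≃ p)
    (A : Matrix m n α) : ‖reindex e f A‖₊ = ‖A‖₊ := by
  refine le_antisymm (linfty_opNNNorm_le_iff.2 fun i => ?_) (linfty_opNNNorm_le_iff.2 fun i => ?_)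
  · simpa [f.symm.sum_comp (fun j => ‖A (e.symm i) j‖₊)] using
      linfty_opNNNorm_le_iff.1 le_rfl (e.symm i)
  · simpa [f.symm.sum_comp (fun j => ‖A i j‖₊)] using
      linfty_opNNNorm_le_iff.1 (le_refl ‖reindex e f A‖₊) (e i)

end LinftyOp

end Matrix

section

attribute [local instance] Matrix.linftyOpNormedAddCommGroup Matrix.linftyOpNormedSpace
  Matrix.linftyOpNormedRing

theorem norm_kron3_le {α β γ : Type*} [Fintype α] [Fintype β] [Fintype γ]
    (A : Matrix α α ℝ) (B : Matrix β β ℝ) (C : Matrix γ γ ℝ) :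
    ‖kron3 A B C‖ ≤ ‖A‖ * ‖B‖ * ‖C‖ := by
  have h : ‖kron3 A B C‖₊ ≤ ‖A‖₊ * ‖B‖₊ * ‖C‖₊ := by
    rw [kron3, Matrix.linfty_opNNNorm_reindex]
    exact (Matrix.linfty_opNNNorm_kronecker_le _ _).trans
      (mul_le_mul_left (Matrix.linfty_opNNNorm_kronecker_le _ _) _)
  exact_mod_cast h

theorem linfty_opNorm_W : ‖!![(1 : ℝ), -1; -1, 1]‖ = 2 := by
  rw [Matrix.linfty_opNorm_def]
  simp [Finset.univ_fin2, one_add_one_eq_two]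

theorem norm_SgmCell_le {ℏ m : ℝ} (hℏ : 0 < ℏ) (hm : 0 < m) (Δx Δy Δz : ℝ)
    (U : Fin 2 × Fin 2 × Fin 2 → ℝ) :
    ‖SgmCell ℏ m Δx Δy Δz U‖ ≤ (2*ℏ/m) * (1/Δx^2 + 1/Δy^2 + 1/Δz^2)
        + (1/ℏ) * (Finset.univ.sup' Finset.univ_nonempty
            (fun c : Fin 2 × Fin 2 × Fin 2 => |U c|)) := by
  have hU : ‖diagonal U‖ ≤ Finset.univ.sup' Finset.univ_nonempty (fun c => |U c|) := by
    rw [linfty_opNorm_diagonal, pi_norm_le_iff_of_nonempty]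
    exact fun c => Finset.le_sup' (fun c => |U c|) (Finset.mem_univ c)
  rw [SgmCell]
  refine (norm_add_le _ _).trans ?_
  rw [norm_smul_of_nonneg (by positivity), norm_smul_of_nonneg (by positivity)]
  refine add_le_add ?_ (by gcongr)
  refine (mul_le_mul_of_nonneg_left norm_add₃_le (by positivity)).trans ?_
  rw [norm_smul_of_nonneg (by positivity), norm_smul_of_nonneg (by positivity),
    norm_smul_of_nonneg (by positivity)]
  grw [norm_kron3_le, norm_kron3_le, norm_kron3_le]
  rw [norm_one, linfty_opNorm_W]
  exact le_of_eq (by ring)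

end

theorem fdtdq_single_cell_CFL_bound
    (ℏ m Δx Δy Δz : ℝ) (hℏ : 0 < ℏ) (hm : 0 < m)
    (U : Fin 2 × Fin 2 × Fin 2 → ℝ) :
    ∀ μ ∈ spectrum ℝ (SgmCell ℏ m Δx Δy Δz U),
      |μ| ≤ (2*ℏ/m) * (1/Δx^2 + 1/Δy^2 + 1/Δz^2)
        + (1/ℏ) * (Finset.univ.sup' Finset.univ_nonempty
            (fun c : Fin 2 × Fin 2 × Fin 2 => |U c|)) := by
  intro μ hμ
  let _ : NormedRing (Matrix (Fin 2 × Fin 2 × Fin 2) (Fin 2 × Fin 2 × Fin 2) ℝ) :=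
    Matrix.linftyOpNormedRing
  let _ : NormedAlgebra ℝ (Matrix (Fin 2 × Fin 2 × Fin 2) (Fin 2 × Fin 2 × Fin 2) ℝ) :=
    Matrix.linftyOpNormedAlgebra
  exact (spectrum.norm_le_norm_of_mem hμ).trans (norm_SgmCell_le hℏ hm Δx Δy Δz U)
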